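/- With H, κ, and mean embeddings as above, and with ℱ the closed unit ball of H, the supremum sup_{f∈ℱ} (∫f d𝔭 − ∫f d𝔮) equals ‖μ_𝔭 − μ_𝔮‖_H, and its square equals E_{x,x'∼𝔭}[κ(x,x')] − 2 E_{x∼𝔭, x'∼𝔮}[κ(x,x')] + E_{x,x'∼𝔮}[κ(x,x')]. -/

import Mathlib

open MeasureTheory

lemma sSup_inner_unit_ball {H : Type*} [NormedAddCommGroup H] [InnerProductSpace ℝ H]
    (v : H) : sSup {r : ℝ | ∃ f : H, ‖f‖ ≤ 1 ∧ r = (inner ℝ v f : ℝ)} = ‖v‖ := by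
  have hbdd : ∀ r ∈ {r : ℝ | ∃ f : H, ‖f‖ ≤ 1 ∧ r = (inner ℝ v f : ℝ)}, r ≤ ‖v‖ := by
    rintro r ⟨f, hf, rfl⟩
    calc (inner ℝ v f : ℝ) ≤ ‖v‖ * ‖f‖ := real_inner_le_norm v f
      _ ≤ ‖v‖ * 1 := by nlinarith [norm_nonneg v]
      _ = ‖v‖ := mul_one _
  apply le_antisymm
  · exact csSup_le ⟨0, 0, by simp⟩ hbdd
  · apply le_csSup ⟨‖v‖, hbdd⟩
    by_cases hv : v = 0
    · exact ⟨0, by simp [hv]⟩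
    · refine ⟨‖v‖⁻¹ • v, ?_, ?_⟩
      · rw [norm_smul]
        simp [norm_ne_zero_iff.mpr hv]
      · rw [real_inner_smul_right, real_inner_self_eq_norm_sq]
        field_simp [norm_ne_zero_iff.mpr hv]

/-- With H an RKHS with feature map `k` (κ(s,t) = ⟪k s, k t⟫,
reproducing property f(t) = ⟪f, k t⟫) and mean embeddings μ_𝔭, μ_𝔮, the MMD
over the closed unit ball ℱ of H satisfies
sup_{‖f‖≤1} (∫ f d𝔭 − ∫ f d𝔮) = ‖μ_𝔭 − μ_𝔮‖, and its square equals
E_{𝔭⊗𝔭}[κ] − 2 E_{𝔭⊗𝔮}[κ] + E_{𝔮⊗𝔮}[κ]. -/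
theorem mmd_unit_ball_eq_norm_of_mean_embeddings
    {E : Type*} [MeasurableSpace E]
    {H : Type*} [NormedAddCommGroup H] [InnerProductSpace ℝ H] [CompleteSpace H]
    (k : E → H)
    (p q : Measure E) [IsProbabilityMeasure p] [IsProbabilityMeasure q]
    (hkp : Integrable (fun t => ‖k t‖) p) (hkq : Integrable (fun t => ‖k t‖) q)
    (μp μq : H)
    (hμp : ∀ f : H, ∫ t, (inner ℝ f (k t) : ℝ) ∂p = (inner ℝ μp f : ℝ))
    (hμq : ∀ f : H, ∫ t, (inner ℝ f (k t) : ℝ) ∂q = (inner ℝ μq f : ℝ)) :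
    sSup {r : ℝ | ∃ f : H, ‖f‖ ≤ 1 ∧
        r = ∫ t, (inner ℝ f (k t) : ℝ) ∂p - ∫ t, (inner ℝ f (k t) : ℝ) ∂q}
      = ‖μp - μq‖ ∧
    ‖μp - μq‖ ^ 2 =
      (∫ s, ∫ t, (inner ℝ (k s) (k t) : ℝ) ∂p ∂p)
        - 2 * (∫ s, ∫ t, (inner ℝ (k s) (k t) : ℝ) ∂q ∂p)
        + (∫ s, ∫ t, (inner ℝ (k s) (k t) : ℝ) ∂q ∂q) := by
  constructor
  · have hset : {r : ℝ | ∃ f : H, ‖f‖ ≤ 1 ∧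
        r = ∫ t, (inner ℝ f (k t) : ℝ) ∂p - ∫ t, (inner ℝ f (k t) : ℝ) ∂q}
        = {r : ℝ | ∃ f : H, ‖f‖ ≤ 1 ∧ r = (inner ℝ (μp - μq) f : ℝ)} := by
      ext r
      simp only [Set.mem_setOf_eq, hμp, hμq, inner_sub_left]
    rw [hset, sSup_inner_unit_ball]
  · have hpp : ∫ s, ∫ t, (inner ℝ (k s) (k t) : ℝ) ∂p ∂p = (inner ℝ μp μp : ℝ) := by
      simp_rw [fun s => hμp (k s)]
      exact hμp μp
    have hpq : ∫ s, ∫ t, (inner ℝ (k s) (k t) : ℝ) ∂q ∂p = (inner ℝ μp μq : ℝ) := by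
      simp_rw [fun s => hμq (k s)]
      exact hμp μq
    have hqq : ∫ s, ∫ t, (inner ℝ (k s) (k t) : ℝ) ∂q ∂q = (inner ℝ μq μq : ℝ) := by
      simp_rw [fun s => hμq (k s)]
      exact hμq μq
    rw [hpp, hpq, hqq, ← real_inner_self_eq_norm_sq]
    simp only [inner_sub_left, inner_sub_right]
    rw [real_inner_comm μq μp]
    ring
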